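/- arXiv:1708.03728 — 2 statements merged into one kernel-verified Lean document; each statement's English description precedes it below -/
import Mathlib

section
/- Let N ≥ 1, x₀, v₀ ∈ ℝ^N, and for ε > 0 set u_{ε,0}(x) = e^{i x·v₀/ε} R((x−x₀)/ε) and m = ∫_{ℝ^N} R² dx. Then: (i) for every ε > 0, ε^{1−N} ∫_{ℝ^N} Im( conj(u_{ε,0}(x)) · ∇u_{ε,0}(x) ) dx = m v₀; (ii) if V : ℝ^N → ℝ is of class C³ and bounded together with its derivatives up to order 3, and χ ∈ C^∞(ℝ^N) satisfies 0 ≤ χ ≤ 1, χ(x) = 1 for |x| < ρ and χ(x) = 0 for |x| > 2ρ, where ρ > |x₀|, then there is C > 0 such that for all ε ∈ (0,1]: | m V(x₀) − ε^{−N} ∫_{ℝ^N} χ(x) V(x) |u_{ε,0}(x)|² dx | ≤ C ε². -/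
open MeasureTheory Real Filter Topology
open scoped InnerProductSpace BigOperators

noncomputable section

/-- Euclidean space ℝ^N. -/
abbrev Sp (N : ℕ) := EuclideanSpace ℝ (Fin N)

variable {N : ℕ}

/-- The j-th partial derivative of a complex-valued function on ℝ^N. -/
def pd (u : Sp N → ℂ) (j : Fin N) (x : Sp N) : ℂ :=
  fderiv ℝ u x (EuclideanSpace.single j 1)

/-- |∇u(x)|², the squared euclidean length of the gradient. -/
def gradSq (u : Sp N → ℂ) (x : Sp N) : ℝ :=
  ∑ j, ‖pd u j x‖ ^ 2

/-- The j-th partial derivative of a real-valued function on ℝ^N. -/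
def pdR (u : Sp N → ℝ) (j : Fin N) (x : Sp N) : ℝ :=
  fderiv ℝ u x (EuclideanSpace.single j 1)

/-- |∇u(x)|² for a real-valued function. -/
def gradSqR (u : Sp N → ℝ) (x : Sp N) : ℝ :=
  ∑ j, pdR u j x ^ 2

/-- The Laplacian of a real-valued function. -/
def lapR (u : Sp N → ℝ) (x : Sp N) : ℝ :=
  ∑ j, fderiv ℝ (fun y => pdR u j y) x (EuclideanSpace.single j 1)

/-- The Laplacian of a complex-valued function. -/
def lap (u : Sp N → ℂ) (x : Sp N) : ℂ :=
  ∑ j, fderiv ℝ (fun y => pd u j y) x (EuclideanSpace.single j 1)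

/-- Σ-class: C¹ with u, ∇u and |x|u square integrable. -/
def IsSigma (u : Sp N → ℂ) : Prop :=
  ContDiff ℝ 1 u ∧ Integrable (fun x => ‖u x‖ ^ 2) ∧
    Integrable (fun x => gradSq u x) ∧
    Integrable (fun x => ‖x‖ ^ 2 * ‖u x‖ ^ 2)

/-- Σ-class for real-valued functions. -/
def IsSigmaR (u : Sp N → ℝ) : Prop :=
  ContDiff ℝ 1 u ∧ Integrable (fun x => u x ^ 2) ∧
    Integrable (fun x => gradSqR u x) ∧
    Integrable (fun x => ‖x‖ ^ 2 * u x ^ 2)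

/-- The squared Σ-norm. -/
def sigmaNormSq (u : Sp N → ℂ) : ℝ :=
  ∫ x, (gradSq u x + ‖x‖ ^ 2 * ‖u x‖ ^ 2 + ‖u x‖ ^ 2)

/-- The integrand |u|² log |u|² (with the convention 0 log 0 = 0, as Real.log 0 = 0). -/
def logTerm (u : Sp N → ℂ) (x : Sp N) : ℝ :=
  ‖u x‖ ^ 2 * Real.log (‖u x‖ ^ 2)

/-- W-class: C¹ with u, ∇u square integrable and |u|² log|u|² integrable. -/
def IsW (u : Sp N → ℂ) : Prop :=
  ContDiff ℝ 1 u ∧ Integrable (fun x => ‖u x‖ ^ 2) ∧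
    Integrable (fun x => gradSq u x) ∧ Integrable (logTerm u)

/-- The Gausson R(x) = e^{(1+N)/2} e^{-|x|²}. -/
def gausson (N : ℕ) (x : Sp N) : ℝ :=
  Real.exp ((1 + N) / 2) * Real.exp (-‖x‖ ^ 2)

/-- The mass of the Gausson, m = ∫ R². -/
def massR (N : ℕ) : ℝ := ∫ x, gausson N x ^ 2

/-- The energy 𝓔(u) = ½∫|∇u|² - ∫|u|² log|u|². -/
def energy (u : Sp N → ℂ) : ℝ :=
  (1 / 2) * (∫ x, gradSq u x) - ∫ x, logTerm u x

/-- The energy of the Gausson, 𝓔(R). -/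
def energyR (N : ℕ) : ℝ :=
  (1 / 2) * (∫ x, gradSqR (gausson N) x)
    - ∫ x, gausson N x ^ 2 * Real.log (gausson N x ^ 2)

/-- The squared H¹ norm. -/
def h1NormSq (u : Sp N → ℂ) : ℝ :=
  (∫ x, gradSq u x) + ∫ x, ‖u x‖ ^ 2

/-- The squared H¹ distance ‖φ - e^{iθ}R(·-y)‖²_{H¹}. -/
def h1DistToGausson (N : ℕ) (φ : Sp N → ℂ) (y : Sp N) (θ : ℝ) : ℝ :=
  (∫ x, ∑ j, ‖pd φ j x - Complex.exp (Complex.I * (θ : ℂ)) * (pdR (gausson N) j (x - y) : ℝ)‖ ^ 2)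
    + ∫ x, ‖φ x - Complex.exp (Complex.I * (θ : ℂ)) * (gausson N (x - y) : ℝ)‖ ^ 2

/-- The Gausson-type initial datum u_{ε,0}(x) = e^{i x·v₀/ε} R((x-x₀)/ε). -/
def gaussonInit (N : ℕ) (x₀ v₀ : Sp N) (ε : ℝ) (x : Sp N) : ℂ :=
  Complex.exp (Complex.I * ((⟪x, v₀⟫_ℝ / ε : ℝ) : ℂ)) * (gausson N (ε⁻¹ • (x - x₀)) : ℝ)

/-- The scaled energy E_ε(u); note 1/(2ε^{N-2}) = ε²/(2ε^N). -/
def Eeps (N : ℕ) (V : Sp N → ℝ) (ε : ℝ) (u : Sp N → ℂ) : ℝ :=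
  (ε ^ 2 / (2 * ε ^ N)) * (∫ x, gradSq u x)
    + (ε ^ N)⁻¹ * (∫ x, V x * ‖u x‖ ^ 2)
    - (ε ^ N)⁻¹ * ∫ x, logTerm u x

/-- V is Cᵏ and bounded together with its derivatives up to order k. -/
def BddDerivs (N : ℕ) (V : Sp N → ℝ) (k : ℕ) : Prop :=
  ContDiff ℝ (k : ℕ∞) V ∧ ∀ i : ℕ, i ≤ k → ∃ B : ℝ, ∀ x, ‖iteratedFDeriv ℝ i V x‖ ≤ B

/-- The action S(u) = ¼∫|∇u|² + ∫|u|² - ½∫|u|² log|u|². -/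
def actionS (u : Sp N → ℂ) : ℝ :=
  (1 / 4) * (∫ x, gradSq u x) + (∫ x, ‖u x‖ ^ 2) - (1 / 2) * ∫ x, logTerm u x

/-- The quadratic form Q(z) = ½∫|∇z|² + 2∫|x|²|z|² - N∫|z|² - 2∫(Re z)². -/
def quadQ (N : ℕ) (z : Sp N → ℂ) : ℝ :=
  (1 / 2) * (∫ x, gradSq z x) + 2 * (∫ x, ‖x‖ ^ 2 * ‖z x‖ ^ 2)
    - N * (∫ x, ‖z x‖ ^ 2) - 2 * ∫ x, (z x).re ^ 2

/-- The squared scaled H¹_ε norm: ε^{2-N}∫|∇φ|² + ε^{-N}∫|φ|². -/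
def h1EpsNormSq (N : ℕ) (ε : ℝ) (u : Sp N → ℂ) : ℝ :=
  ε ^ (2 - (N : ℝ)) * (∫ x, gradSq u x) + (ε ^ N)⁻¹ * ∫ x, ‖u x‖ ^ 2

/-- Second-order Taylor expansion of the action S at the Gausson R, with second
variation given by the quadratic form Q. -/
def TaylorS (N : ℕ) : Prop :=
  ∀ η > (0 : ℝ), ∃ ρ > (0 : ℝ), ∀ w : Sp N → ℂ, IsSigma w → Integrable (logTerm w) →
    Real.sqrt (h1NormSq (fun x => w x - (gausson N x : ℂ))) < ρ →
    |actionS w - actionS (fun x => (gausson N x : ℂ))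
        - (1 / 2) * quadQ N (fun x => w x - (gausson N x : ℂ))|
      ≤ η * h1NormSq (fun x => w x - (gausson N x : ℂ))

/-!
The phase `e^{i x·v₀/ε}` has modulus one and gradient `v₀/ε`, so `Im(conj u ∇u) = |u|² v₀/ε`,
and (i) reduces to the scaling identity `∫ R((x - x₀)/ε)² dx = ε^N m`.

For (ii) put `g = χ V`: it is `C²` with compact support and `g x₀ = V x₀`. The substitution
`x = x₀ + ε z` turns `ε^{-N} ∫ χ V |u|²` into `∫ g(x₀ + ε z) R(z)² dz`. Since `R²` is even, the
first-order Taylor term of `g` at `x₀` integrates to zero, and the second-order remainder is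
at most `sup ‖D²g‖ ε² ∫ |z|² R(z)² dz`.
-/

section Calculus

variable {E F : Type*} [NormedAddCommGroup E] [NormedSpace ℝ E] [NormedAddCommGroup F]
  [NormedSpace ℝ F]

theorem norm_sub_sub_fderiv_le_of_norm_fderiv_fderiv_le {g : E → F} (hg : ContDiff ℝ 2 g)
    {M : ℝ} (hM : ∀ x, ‖fderiv ℝ (fderiv ℝ g) x‖ ≤ M) (x h : E) :
    ‖g (x + h) - g x - fderiv ℝ g x h‖ ≤ M * ‖h‖ ^ 2 := by
  have hM0 : 0 ≤ M := (norm_nonneg (fderiv ℝ (fderiv ℝ g) x)).trans (hM x)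
  have hlip : LipschitzWith ⟨M, hM0⟩ (fderiv ℝ g) :=
    lipschitzWith_of_nnnorm_fderiv_le
      ((hg.fderiv_right (m := 1) le_rfl).differentiable one_ne_zero) fun y => hM y
  have hdiff : ∀ y ∈ Metric.closedBall x ‖h‖, DifferentiableAt ℝ g y :=
    fun y _ => hg.differentiable two_ne_zero y
  have hbound : ∀ y ∈ Metric.closedBall x ‖h‖, ‖fderiv ℝ g y - fderiv ℝ g x‖ ≤ M * ‖h‖ :=
    fun y hy => by
      rw [← dist_eq_norm]
      exact (hlip.dist_le_mul y x).trans
        (mul_le_mul_of_nonneg_left (Metric.mem_closedBall.mp hy) hM0)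
  have := (convex_closedBall x ‖h‖).norm_image_sub_le_of_norm_fderiv_le' hdiff hbound
    (Metric.mem_closedBall_self (norm_nonneg h)) (y := x + h) (by simp [dist_eq_norm])
  rw [add_sub_cancel_left] at this
  linarith

end Calculus

section Rescaling

variable {E F : Type*} [NormedAddCommGroup E] [NormedSpace ℝ E] [MeasurableSpace E]
  [BorelSpace E] [FiniteDimensional ℝ E] [NormedAddCommGroup F] [NormedSpace ℝ F]

theorem integral_comp_inv_smul_sub (μ : Measure E) [μ.IsAddHaarMeasure] (f : E → F) (x₀ : E)
    {ε : ℝ} (hε : 0 ≤ ε) :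
    ∫ x, f (ε⁻¹ • (x - x₀)) ∂μ = ε ^ Module.finrank ℝ E • ∫ z, f z ∂μ := by
  rw [integral_sub_right_eq_self (fun x => f (ε⁻¹ • x)) x₀,
    Measure.integral_comp_inv_smul_of_nonneg μ f hε]

end Rescaling

section EvenWeight

variable {E : Type*} [NormedAddCommGroup E] [NormedSpace ℝ E] [MeasurableSpace E]
  [BorelSpace E] {μ : Measure E} {w : E → ℝ}

theorem integral_clm_mul_eq_zero_of_even [μ.IsNegInvariant] (hw : ∀ z, w (-z) = w z)
    (L : E →L[ℝ] ℝ) : ∫ z, L z * w z ∂μ = 0 := by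
  have h := integral_neg_eq_self (fun z => L z * w z) μ
  simp only [map_neg, hw, neg_mul, integral_neg] at h
  linarith

theorem integrable_clm_mul (hw : Integrable w μ)
    (hw2 : Integrable (fun z => ‖z‖ ^ 2 * w z) μ) (L : E →L[ℝ] ℝ) :
    Integrable (fun z => L z * w z) μ := by
  refine ((hw.norm.add hw2.norm).const_mul ‖L‖).mono'
    (L.continuous.aestronglyMeasurable.mul hw.aestronglyMeasurable) (ae_of_all _ fun z => ?_)
  have hz : ‖z‖ ≤ 1 + ‖z‖ ^ 2 := by nlinarith [sq_nonneg (‖z‖ - 1)]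
  calc ‖L z * w z‖ ≤ ‖L‖ * ‖z‖ * ‖w z‖ := by
        rw [norm_mul]; exact mul_le_mul_of_nonneg_right (L.le_opNorm z) (norm_nonneg _)
    _ ≤ ‖L‖ * ((1 + ‖z‖ ^ 2) * ‖w z‖) := by
        rw [mul_assoc]; gcongr
    _ = ‖L‖ * (‖w z‖ + ‖‖z‖ ^ 2 * w z‖) := by
        rw [norm_mul, norm_pow, norm_norm]; ring

theorem abs_mul_integral_sub_integral_comp_add_smul_le [μ.IsNegInvariant]
    (hw_even : ∀ z, w (-z) = w z) (hw0 : ∀ z, 0 ≤ w z) (hw : Integrable w μ)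
    (hw2 : Integrable (fun z => ‖z‖ ^ 2 * w z) μ) {g : E → ℝ} (hg : ContDiff ℝ 2 g) {M : ℝ}
    (hM : ∀ x, ‖fderiv ℝ (fderiv ℝ g) x‖ ≤ M) (x₀ : E) (ε : ℝ) :
    |g x₀ * ∫ z, w z ∂μ - ∫ z, g (x₀ + ε • z) * w z ∂μ|
      ≤ M * ε ^ 2 * ∫ z, ‖z‖ ^ 2 * w z ∂μ := by
  set L := fderiv ℝ g x₀
  set r : E → ℝ := fun z => g (x₀ + ε • z) - g x₀ - L (ε • z)
  have hr : ∀ z, |r z| ≤ M * ε ^ 2 * ‖z‖ ^ 2 := fun z => by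
    have := norm_sub_sub_fderiv_le_of_norm_fderiv_fderiv_le hg hM x₀ (ε • z)
    rwa [norm_smul, mul_pow, ← mul_assoc, Real.norm_eq_abs, Real.norm_eq_abs, sq_abs] at this
  have hr_cont : Continuous r := by fun_prop
  have hrw : Integrable (fun z => r z * w z) μ := by
    refine (hw2.const_mul (M * ε ^ 2)).mono'
      (hr_cont.aestronglyMeasurable.mul hw.aestronglyMeasurable) (ae_of_all _ fun z => ?_)
    rw [norm_mul, Real.norm_eq_abs, Real.norm_eq_abs, abs_of_nonneg (hw0 z), ← mul_assoc]
    exact mul_le_mul_of_nonneg_right (hr z) (hw0 z)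
  have hsplit : (fun z => g (x₀ + ε • z) * w z)
      = fun z => (g x₀ * w z + ε * (L z * w z)) + r z * w z := by
    ext z; simp only [r, map_smul, smul_eq_mul]; ring
  have hlin : Integrable (fun z => g x₀ * w z + ε * (L z * w z)) μ :=
    (hw.const_mul _).add ((integrable_clm_mul hw hw2 L).const_mul ε)
  have hLw : Integrable (fun z => ε * (L z * w z)) μ := (integrable_clm_mul hw hw2 L).const_mul ε
  rw [hsplit, integral_add hlin hrw, integral_add (hw.const_mul _) hLw, integral_const_mul,
    integral_const_mul, integral_clm_mul_eq_zero_of_even hw_even, mul_zero, add_zero,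
    sub_add_cancel_left, abs_neg, ← integral_const_mul]
  refine (abs_integral_le_integral_abs).trans (integral_mono hrw.abs (hw2.const_mul _) fun z => ?_)
  rw [abs_mul, abs_of_nonneg (hw0 z), ← mul_assoc]
  exact mul_le_mul_of_nonneg_right (hr z) (hw0 z)

end EvenWeight

section Phase

variable {E : Type*} [NormedAddCommGroup E] [NormedSpace ℝ E]

theorem im_conj_mul_fderiv_exp_mul_ofReal {θ S : E → ℝ} {x : E} (hθ : DifferentiableAt ℝ θ x)
    (hS : DifferentiableAt ℝ S x) (h : E) :
    ((starRingEnd ℂ) (Complex.exp (Complex.I * θ x) * S x)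
        * fderiv ℝ (fun y => Complex.exp (Complex.I * θ y) * S y) x h).im
      = S x ^ 2 * fderiv ℝ θ x h := by
  have hθ' := (Complex.ofRealCLM.hasFDerivAt.comp x hθ.hasFDerivAt).const_mul Complex.I
  have hS' := Complex.ofRealCLM.hasFDerivAt.comp x hS.hasFDerivAt
  have hu : HasFDerivAt (fun y => Complex.exp (Complex.I * θ y) * S y) _ x := hθ'.cexp.mul hS'
  rw [hu.fderiv]
  have hcis :
      (Complex.exp (Complex.I * θ x)).re ^ 2 + (Complex.exp (Complex.I * θ x)).im ^ 2 = 1 := by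
    rw [mul_comm, Complex.exp_ofReal_mul_I_re, Complex.exp_ofReal_mul_I_im, cos_sq_add_sin_sq]
  simp only [map_mul, Complex.conj_ofReal, Function.comp_apply, Complex.ofRealCLM_apply,
    add_apply, smul_apply, ContinuousLinearMap.comp_apply, smul_eq_mul, Complex.mul_im,
    Complex.mul_re, Complex.conj_re, Complex.ofReal_re, Complex.conj_im, Complex.ofReal_im,
    mul_zero, sub_zero, Complex.add_im, zero_add, Complex.I_re, Complex.I_im, one_mul, zero_mul,
    sub_self, add_zero, zero_sub, mul_neg, neg_zero, neg_mul, Complex.add_re]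
  linear_combination (S x ^ 2 * fderiv ℝ θ x h) * hcis

end Phase

section Gausson

theorem gausson_nonneg (z : Sp N) : 0 ≤ gausson N z := by
  unfold gausson; positivity

theorem gausson_neg (z : Sp N) : gausson N (-z) = gausson N z := by
  simp only [gausson, norm_neg]

theorem gausson_sq (z : Sp N) : gausson N z ^ 2 = exp (1 + N) * exp (-2 * ‖z‖ ^ 2) := by
  rw [gausson, mul_pow, ← exp_nat_mul, ← exp_nat_mul]
  ring_nf

theorem differentiable_gausson : Differentiable ℝ (gausson N) :=
  (differentiable_id.norm_sq ℝ).neg.exp.const_mul _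

theorem integrable_exp_neg_mul_sq_norm {b : ℝ} (hb : 0 < b) :
    Integrable (fun z : Sp N => exp (-b * ‖z‖ ^ 2)) := by
  refine (GaussianFourier.integrable_cexp_neg_mul_sq_norm_add (V := Sp N)
    (b := (b : ℂ)) (by simpa using hb) 0 0).norm.congr (ae_of_all _ fun z => ?_)
  simp [Complex.norm_exp, ← Complex.ofReal_pow]

theorem integrable_gausson_sq : Integrable (fun z : Sp N => gausson N z ^ 2) := by
  simp_rw [gausson_sq]
  exact (integrable_exp_neg_mul_sq_norm two_pos).const_mul _

theorem integrable_sq_norm_mul_gausson_sq :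
    Integrable (fun z : Sp N => ‖z‖ ^ 2 * gausson N z ^ 2) := by
  refine ((integrable_exp_neg_mul_sq_norm one_pos).const_mul (exp (1 + N))).mono'
    ((continuous_norm.pow 2).mul (differentiable_gausson.continuous.pow 2)).aestronglyMeasurable
    (ae_of_all _ fun z => ?_)
  -- `t * exp (-2 * t) ≤ exp (-t)` because `t + 1 ≤ exp t`
  have hexp : ‖z‖ ^ 2 * exp (-2 * ‖z‖ ^ 2) ≤ exp (-1 * ‖z‖ ^ 2) := by
    have hsplit : exp (-1 * ‖z‖ ^ 2) = exp (-2 * ‖z‖ ^ 2) * exp (‖z‖ ^ 2) := by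
      rw [← exp_add]; ring_nf
    rw [hsplit]
    nlinarith [exp_pos (-2 * ‖z‖ ^ 2), add_one_le_exp (‖z‖ ^ 2)]
  rw [Real.norm_eq_abs, abs_of_nonneg (by positivity), gausson_sq, mul_left_comm]
  exact mul_le_mul_of_nonneg_left hexp (exp_nonneg _)

end Gausson

section InitialDatum

variable (x₀ v₀ : Sp N)

theorem norm_gaussonInit (ε : ℝ) (x : Sp N) :
    ‖gaussonInit N x₀ v₀ ε x‖ = gausson N (ε⁻¹ • (x - x₀)) := by
  rw [gaussonInit, norm_mul, mul_comm Complex.I, Complex.norm_exp_ofReal_mul_I, one_mul,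
    Complex.norm_real, Real.norm_of_nonneg (gausson_nonneg _)]

theorem integral_mul_norm_gaussonInit_sq {ε : ℝ} (hε : 0 < ε) (g : Sp N → ℝ) :
    ∫ x, g x * ‖gaussonInit N x₀ v₀ ε x‖ ^ 2 = ε ^ N * ∫ z, g (x₀ + ε • z) * gausson N z ^ 2 := by
  have h := integral_comp_inv_smul_sub volume (fun z => g (x₀ + ε • z) * gausson N z ^ 2) x₀ hε.le
  simp only [smul_inv_smul₀ hε.ne', add_sub_cancel, finrank_euclideanSpace_fin,
    smul_eq_mul] at h
  simp_rw [norm_gaussonInit, h]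

theorem im_conj_mul_pd_gaussonInit (ε : ℝ) (j : Fin N) (x : Sp N) :
    ((starRingEnd ℂ) (gaussonInit N x₀ v₀ ε x) * pd (gaussonInit N x₀ v₀ ε) j x).im
      = ‖gaussonInit N x₀ v₀ ε x‖ ^ 2 * (v₀ j / ε) := by
  have hθ : HasFDerivAt (fun y : Sp N => ⟪y, v₀⟫_ℝ / ε) (ε⁻¹ • innerSL ℝ v₀) x := by
    convert (ε⁻¹ • innerSL ℝ v₀).hasFDerivAt using 1
    ext y; simp [real_inner_comm, div_eq_inv_mul]
  have hS : DifferentiableAt ℝ (fun y : Sp N => gausson N (ε⁻¹ • (y - x₀))) x :=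
    differentiable_gausson.differentiableAt.comp x (by fun_prop)
  have key := im_conj_mul_fderiv_exp_mul_ofReal hθ.differentiableAt hS (EuclideanSpace.single j 1)
  rw [hθ.fderiv] at key
  rw [norm_gaussonInit]
  refine key.trans (congrArg _ ?_)
  simp only [smul_apply, innerSL_apply_apply, smul_eq_mul, EuclideanSpace.inner_single_right]
  simp [div_eq_inv_mul]

theorem integral_im_conj_mul_pd_gaussonInit {ε : ℝ} (hε : 0 < ε) (j : Fin N) :
    ∫ x, ((starRingEnd ℂ) (gaussonInit N x₀ v₀ ε x) * pd (gaussonInit N x₀ v₀ ε) j x).im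
      = ε ^ N * massR N * (v₀ j / ε) := by
  simp_rw [im_conj_mul_pd_gaussonInit, integral_mul_const]
  simpa [massR] using congrArg (· * (v₀ j / ε)) (integral_mul_norm_gaussonInit_sq x₀ v₀ hε 1)

theorem abs_massR_mul_sub_integral_mul_norm_gaussonInit_sq_le {g : Sp N → ℝ}
    (hg : ContDiff ℝ 2 g) (hgc : HasCompactSupport g) :
    ∃ C, 0 < C ∧ ∀ ε : ℝ, 0 < ε →
      |massR N * g x₀ - (ε ^ N)⁻¹ * ∫ x, g x * ‖gaussonInit N x₀ v₀ ε x‖ ^ 2| ≤ C * ε ^ 2 := by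
  obtain ⟨M, hM⟩ := ((hg.fderiv_right (m := 1) le_rfl).continuous_fderiv one_ne_zero
    ).bounded_above_of_compact_support ((hgc.fderiv ℝ).fderiv ℝ)
  have hM0 : 0 ≤ M := (norm_nonneg _).trans (hM 0)
  set J := ∫ z, ‖z‖ ^ 2 * gausson N z ^ 2
  have hJ0 : 0 ≤ J := integral_nonneg fun z => by positivity
  refine ⟨M * J + 1, by nlinarith [mul_nonneg hM0 hJ0], fun ε hε => ?_⟩
  rw [integral_mul_norm_gaussonInit_sq x₀ v₀ hε, inv_mul_cancel_left₀ (pow_ne_zero _ hε.ne'),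
    mul_comm, massR]
  calc _ ≤ M * ε ^ 2 * J :=
        abs_mul_integral_sub_integral_comp_add_smul_le (fun z => by rw [gausson_neg])
          (fun z => sq_nonneg (gausson N z)) integrable_gausson_sq
          integrable_sq_norm_mul_gausson_sq hg hM x₀ ε
    _ ≤ (M * J + 1) * ε ^ 2 := by nlinarith [sq_nonneg ε]

end InitialDatum

theorem stmt4_general (N : ℕ) (x₀ v₀ : Sp N) :
    (∀ ε : ℝ, 0 < ε → ∀ j : Fin N,
      (ε / ε ^ N) * ∫ x, ((starRingEnd ℂ) (gaussonInit N x₀ v₀ ε x)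
          * pd (gaussonInit N x₀ v₀ ε) j x).im = massR N * v₀ j) ∧
    (∀ V : Sp N → ℝ, BddDerivs N V 3 →
      ∀ ρ : ℝ, ‖x₀‖ < ρ →
      ∀ χ : Sp N → ℝ, ContDiff ℝ (⊤ : ℕ∞) χ →
        (∀ x, 0 ≤ χ x) → (∀ x, χ x ≤ 1) →
        (∀ x, ‖x‖ < ρ → χ x = 1) → (∀ x, 2 * ρ < ‖x‖ → χ x = 0) →
        ∃ C : ℝ, 0 < C ∧ ∀ ε : ℝ, 0 < ε → ε ≤ 1 →
          |massR N * V x₀ - (ε ^ N)⁻¹ *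
              ∫ x, χ x * V x * ‖gaussonInit N x₀ v₀ ε x‖ ^ 2| ≤ C * ε ^ 2) := by
  refine ⟨fun ε hε j => ?_, fun V hV ρ hρ χ hχ _ _ hχ_one hχ_zero => ?_⟩
  · rw [integral_im_conj_mul_pd_gaussonInit x₀ v₀ hε j]
    field_simp
  · have hχc : HasCompactSupport χ :=
      HasCompactSupport.intro (isCompact_closedBall 0 (2 * ρ)) fun x hx =>
        hχ_zero x (by simpa using hx)
    have hg : ContDiff ℝ 2 (fun x => χ x * V x) :=
      (hχ.of_le (by norm_cast)).mul (hV.1.of_le (by norm_num))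
    obtain ⟨C, hC, hbound⟩ :=
      abs_massR_mul_sub_integral_mul_norm_gaussonInit_sq_le x₀ v₀ hg hχc.mul_right
    refine ⟨C, hC, fun ε hε _ => ?_⟩
    simpa [hχ_one x₀ hρ] using hbound ε hε

/-- momentum and localized potential energy of the initial datum. -/
theorem stmt4 (N : ℕ) (hN : 1 ≤ N) (x₀ v₀ : Sp N) :
    (∀ ε : ℝ, 0 < ε → ∀ j : Fin N,
      (ε / ε ^ N) * ∫ x, ((starRingEnd ℂ) (gaussonInit N x₀ v₀ ε x)
          * pd (gaussonInit N x₀ v₀ ε) j x).im = massR N * v₀ j) ∧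
    (∀ V : Sp N → ℝ, BddDerivs N V 3 →
      ∀ ρ : ℝ, ‖x₀‖ < ρ →
      ∀ χ : Sp N → ℝ, ContDiff ℝ (⊤ : ℕ∞) χ →
        (∀ x, 0 ≤ χ x) → (∀ x, χ x ≤ 1) →
        (∀ x, ‖x‖ < ρ → χ x = 1) → (∀ x, 2 * ρ < ‖x‖ → χ x = 0) →
        ∃ C : ℝ, 0 < C ∧ ∀ ε : ℝ, 0 < ε → ε ≤ 1 →
          |massR N * V x₀ - (ε ^ N)⁻¹ *
              ∫ x, χ x * V x * ‖gaussonInit N x₀ v₀ ε x‖ ^ 2| ≤ C * ε ^ 2) :=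
  stmt4_general N x₀ v₀
end
end

section
/- Let N ≥ 1, let R be the Gausson, and let u : ℝ^N → ℂ be of Σ-class. Suppose (y₀, θ₀) ∈ ℝ^N × ℝ minimizes the function (y, θ) ↦ ‖e^{iθ} u(·−y) − R‖²_{L²} over ℝ^N × ℝ, and set w(x) = e^{iθ₀} u(x−y₀). Then w satisfies the orthogonality conditions Im ∫_{ℝ^N} w(x) R(x) dx = 0 and Re ∫_{ℝ^N} w(x) ∂R/∂x_j(x) dx = 0 for all j = 1, …, N. (First-order conditions at an optimal modulation.) -/
open MeasureTheory Real Filter Topology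
open scoped InnerProductSpace BigOperators

noncomputable section

variable {N : ℕ}

/-!
Expanding the square, `‖e^{iθ} u(· - y) - R‖² = ‖u‖² + ‖R‖² - 2 Re ∫ e^{iθ} u(x - y) R(x) dx`,
so an optimal modulation maximizes the overlap `Re ∫ e^{iθ} u(x - y) R(x) dx`. In `θ` the overlap
is `Re (e^{iθ} c)`, which is maximal only where `e^{iθ} c` is real. In `y`, moving the
translation onto `R` turns the overlap into `Re ∫ w(x) R(x + t e_j) dx`, whose derivative at
`t = 0` is `Re ∫ w ∂_j R`. Differentiation under the integral is legitimate because
`∇R(x + t e_j)` is dominated by a fixed Gaussian in `x` for `|t| < 1`, and `w ∈ L²`.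
-/

section Overlap

variable {G : Type*} [MeasurableSpace G] {μ : Measure G}

lemma integral_norm_sub_sq {f g : G → ℂ} (hf : MemLp f 2 μ) (hg : MemLp g 2 μ) :
    ∫ x, ‖f x - g x‖ ^ 2 ∂μ
      = ∫ x, ‖f x‖ ^ 2 ∂μ + ∫ x, ‖g x‖ ^ 2 ∂μ
        - 2 * (∫ x, f x * (starRingEnd ℂ) (g x) ∂μ).re := by
  have hf2 : Integrable (fun x => ‖f x‖ ^ 2) μ := hf.integrable_norm_pow two_ne_zero
  have hg2 : Integrable (fun x => ‖g x‖ ^ 2) μ := hg.integrable_norm_pow two_ne_zero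
  have hfg : Integrable (fun x => f x * (starRingEnd ℂ) (g x)) μ := hf.integrable_mul hg.star
  have hre : Integrable (fun x => (f x * (starRingEnd ℂ) (g x)).re) μ := hfg.re
  have hpt (x : G) : ‖f x - g x‖ ^ 2
      = ‖f x‖ ^ 2 + ‖g x‖ ^ 2 - 2 * (f x * (starRingEnd ℂ) (g x)).re := by
    simp only [← Complex.normSq_eq_norm_sq, Complex.normSq_sub]
  rw [integral_congr_ae (ae_of_all _ hpt),
    integral_sub (f := fun x => ‖f x‖ ^ 2 + ‖g x‖ ^ 2) (hf2.add hg2) (hre.const_mul 2),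
    integral_add hf2 hg2, integral_const_mul]
  exact congrArg (_ - 2 * ·) (integral_re hfg)

variable [AddGroup G] [MeasurableAdd G] [μ.IsAddRightInvariant]

lemma integral_norm_exp_mul_sub_right_sq (u : G → ℂ) (y : G) (θ : ℝ) :
    ∫ x, ‖Complex.exp (Complex.I * θ) * u (x - y)‖ ^ 2 ∂μ = ∫ x, ‖u x‖ ^ 2 ∂μ := by
  simp_rw [norm_mul, mul_comm Complex.I, Complex.norm_exp_ofReal_mul_I, one_mul]
  exact integral_sub_right_eq_self (fun x => ‖u x‖ ^ 2) y

lemma re_integral_mul_le_of_integral_norm_sub_sq_le {u : G → ℂ} {g : G → ℝ}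
    (hu : MemLp u 2 μ) (hg : MemLp g 2 μ) {y₀ y : G} {θ₀ θ : ℝ}
    (h : ∫ x, ‖Complex.exp (Complex.I * θ₀) * u (x - y₀) - g x‖ ^ 2 ∂μ
      ≤ ∫ x, ‖Complex.exp (Complex.I * θ) * u (x - y) - g x‖ ^ 2 ∂μ) :
    (∫ x, Complex.exp (Complex.I * θ) * u (x - y) * g x ∂μ).re
      ≤ (∫ x, Complex.exp (Complex.I * θ₀) * u (x - y₀) * g x ∂μ).re := by
  have hmod (y : G) (θ : ℝ) : MemLp (fun x => Complex.exp (Complex.I * θ) * u (x - y)) 2 μ :=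
    (hu.comp_measurePreserving (measurePreserving_sub_right μ y)).const_mul _
  have hgC : MemLp (fun x => (g x : ℂ)) 2 μ := hg.ofReal
  rw [integral_norm_sub_sq (hmod y₀ θ₀) hgC, integral_norm_sub_sq (hmod y θ) hgC,
    integral_norm_exp_mul_sub_right_sq, integral_norm_exp_mul_sub_right_sq] at h
  simp only [Complex.conj_ofReal] at h
  linarith

end Overlap

lemma im_eq_zero_of_forall_re_exp_mul_le {c : ℂ}
    (h : ∀ θ : ℝ, (Complex.exp (Complex.I * θ) * c).re ≤ c.re) : c.im = 0 := by
  have hrot : Complex.exp (Complex.I * ↑(-c.arg)) * c = ‖c‖ := by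
    calc Complex.exp (Complex.I * ↑(-c.arg)) * c
        = Complex.exp (Complex.I * ↑(-c.arg)) * (‖c‖ * Complex.exp (c.arg * Complex.I)) := by
          rw [Complex.norm_mul_exp_arg_mul_I]
      _ = ‖c‖ * Complex.exp (Complex.I * ↑(-c.arg) + c.arg * Complex.I) := by
          rw [Complex.exp_add]; ring
      _ = ‖c‖ := by push_cast; ring_nf; rw [Complex.exp_zero, mul_one]
  have hre : c.re = ‖c‖ := by
    refine le_antisymm (Complex.re_le_norm c) ?_
    simpa only [hrot, Complex.ofReal_re] using h (-c.arg)
  exact (Complex.nonneg_iff.1 (Complex.re_eq_norm.1 hre)).2.symm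

lemma im_integral_exp_mul_eq_zero_of_forall_re_le {G : Type*} [MeasurableSpace G]
    {μ : Measure G} {f : G → ℂ} {θ₀ : ℝ}
    (h : ∀ θ : ℝ, (∫ x, Complex.exp (Complex.I * θ) * f x ∂μ).re
      ≤ (∫ x, Complex.exp (Complex.I * θ₀) * f x ∂μ).re) :
    (∫ x, Complex.exp (Complex.I * θ₀) * f x ∂μ).im = 0 := by
  refine im_eq_zero_of_forall_re_exp_mul_le fun θ => ?_
  have hθ := h (θ + θ₀)
  simp only [integral_const_mul] at hθ ⊢
  rwa [← mul_assoc, ← Complex.exp_add, ← mul_add, ← Complex.ofReal_add]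

section GaussianDecay

variable {V : Type*} [NormedAddCommGroup V] [InnerProductSpace ℝ V] [FiniteDimensional ℝ V]
  [MeasurableSpace V] [BorelSpace V]

lemma memLp_two_exp_neg_mul_sq_norm {b : ℝ} (hb : 0 < b) :
    MemLp (fun x : V => Real.exp (-b * ‖x‖ ^ 2)) 2 := by
  have hcont : Continuous (fun x : V => Real.exp (-b * ‖x‖ ^ 2)) := by fun_prop
  rw [memLp_two_iff_integrable_sq hcont.aestronglyMeasurable]
  have hint := (GaussianFourier.integrable_cexp_neg_mul_sq_norm_add (V := V)
    (b := ((2 * b : ℝ) : ℂ)) (by simpa using hb) 0 0).norm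
  refine hint.congr (ae_of_all _ fun x => ?_)
  simp only [zero_mul, add_zero, Complex.norm_exp, ← Complex.ofReal_pow, ← Complex.ofReal_neg,
    ← Complex.ofReal_mul, Complex.ofReal_re, sq (Real.exp _), ← Real.exp_add]
  ring_nf

end GaussianDecay

lemma exp_neg_sq_norm_add_le {E : Type*} [SeminormedAddCommGroup E] {x w : E} {a : ℝ}
    (hw : ‖w‖ ≤ a) :
    Real.exp (-‖x + w‖ ^ 2 / 2) ≤ Real.exp (a ^ 2 / 2) * Real.exp (-(1 / 4) * ‖x‖ ^ 2) := by
  rw [← Real.exp_add, Real.exp_le_exp]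
  have hx : ‖x‖ ≤ ‖x + w‖ + ‖w‖ := by simpa using norm_add_le (x + w) (-w)
  have hx2 : ‖x‖ ^ 2 ≤ 2 * ‖x + w‖ ^ 2 + 2 * ‖w‖ ^ 2 := by
    nlinarith [norm_nonneg x, sq_nonneg (‖x + w‖ - ‖w‖)]
  have hw2 : ‖w‖ ^ 2 ≤ a ^ 2 := pow_le_pow_left₀ (norm_nonneg w) hw 2
  linarith

section Gausson

lemma gausson_pos (x : Sp N) : 0 < gausson N x := by
  unfold gausson; positivity

lemma contDiff_gausson {n : WithTop ℕ∞} : ContDiff ℝ n (gausson N) :=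
  contDiff_const.mul (contDiff_norm_sq ℝ).neg.exp

lemma hasFDerivAt_gausson (x : Sp N) :
    HasFDerivAt (gausson N) ((-2 * gausson N x) • innerSL ℝ x) x := by
  have hsq : HasFDerivAt (fun y : Sp N => ‖y‖ ^ 2) (2 • innerSL ℝ x) x := by
    simpa using (hasFDerivAt_id x).norm_sq
  refine (hsq.neg.exp.const_mul (Real.exp ((1 + N) / 2))).congr_fderiv ?_
  ext v
  simp [gausson]
  ring

lemma norm_fderiv_gausson_le (x : Sp N) :
    ‖fderiv ℝ (gausson N) x‖ ≤ 2 * Real.exp ((1 + N) / 2) * Real.exp (-‖x‖ ^ 2 / 2) := by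
  have hdecay : ‖x‖ * Real.exp (-‖x‖ ^ 2) ≤ Real.exp (-‖x‖ ^ 2 / 2) :=
    calc ‖x‖ * Real.exp (-‖x‖ ^ 2) ≤ Real.exp (‖x‖ ^ 2 / 2) * Real.exp (-‖x‖ ^ 2) := by
          gcongr
          nlinarith [Real.add_one_le_exp (‖x‖ ^ 2 / 2), sq_nonneg (‖x‖ - 1)]
      _ = Real.exp (-‖x‖ ^ 2 / 2) := by rw [← Real.exp_add]; ring_nf
  calc ‖fderiv ℝ (gausson N) x‖
      = 2 * Real.exp ((1 + N) / 2) * (‖x‖ * Real.exp (-‖x‖ ^ 2)) := by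
        rw [(hasFDerivAt_gausson x).fderiv, norm_smul, innerSL_apply_norm, Real.norm_eq_abs,
          abs_mul, abs_of_pos (gausson_pos x), gausson]
        norm_num
        ring
    _ ≤ 2 * Real.exp ((1 + N) / 2) * Real.exp (-‖x‖ ^ 2 / 2) := by gcongr

lemma norm_fderiv_gausson_add_le (x : Sp N) {w : Sp N} {a : ℝ} (hw : ‖w‖ ≤ a) :
    ‖fderiv ℝ (gausson N) (x + w)‖
      ≤ 2 * Real.exp ((1 + N) / 2) * Real.exp (a ^ 2 / 2) * Real.exp (-(1 / 4) * ‖x‖ ^ 2) := by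
  rw [mul_assoc _ (Real.exp _)]
  exact (norm_fderiv_gausson_le _).trans (by gcongr; exact exp_neg_sq_norm_add_le hw)

lemma memLp_gausson : MemLp (gausson N) 2 := by
  refine ((memLp_two_exp_neg_mul_sq_norm one_pos).const_mul (Real.exp ((1 + N) / 2))).of_le
    (contDiff_gausson (n := 0)).continuous.aestronglyMeasurable (ae_of_all _ fun x => ?_)
  simp [gausson]

end Gausson

lemma hasDerivAt_integral_mul_gausson_add_smul {f : Sp N → ℂ} (hf : MemLp f 2) (v : Sp N) :
    HasDerivAt (fun t : ℝ => ∫ x, f x * gausson N (x + t • v))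
      (∫ x, f x * fderiv ℝ (gausson N) x v) 0 := by
  set K := 2 * Real.exp ((1 + N) / 2) * Real.exp (‖v‖ ^ 2 / 2) * ‖v‖
  have hfderiv_cont : Continuous (fderiv ℝ (gausson N)) := contDiff_gausson.continuous_fderiv one_ne_zero
  have hint (t : ℝ) : Integrable (fun x => f x * gausson N (x + t • v)) :=
    hf.integrable_mul ((memLp_gausson.comp_measurePreserving
      (measurePreserving_add_right volume (t • v))).ofReal)
  have hbound : Integrable (fun x => ‖f x‖ * (K * Real.exp (-(1 / 4) * ‖x‖ ^ 2))) :=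
    hf.norm.integrable_mul ((memLp_two_exp_neg_mul_sq_norm (by norm_num)).const_mul K)
  have hderiv_le (x : Sp N) (t : ℝ) (ht : t ∈ Metric.ball 0 1) :
      ‖f x * fderiv ℝ (gausson N) (x + t • v) v‖
        ≤ ‖f x‖ * (K * Real.exp (-(1 / 4) * ‖x‖ ^ 2)) := by
    have htv : ‖t • v‖ ≤ ‖v‖ := by
      rw [norm_smul]
      exact mul_le_of_le_one_left (norm_nonneg v) (by simpa using (Metric.mem_ball.1 ht).le)
    rw [norm_mul, Complex.norm_real]
    refine mul_le_mul_of_nonneg_left ?_ (norm_nonneg _)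
    calc ‖fderiv ℝ (gausson N) (x + t • v) v‖
        ≤ ‖fderiv ℝ (gausson N) (x + t • v)‖ * ‖v‖ := ContinuousLinearMap.le_opNorm _ _
      _ ≤ 2 * Real.exp ((1 + N) / 2) * Real.exp (‖v‖ ^ 2 / 2)
            * Real.exp (-(1 / 4) * ‖x‖ ^ 2) * ‖v‖ := by
          gcongr; exact norm_fderiv_gausson_add_le x htv
      _ = K * Real.exp (-(1 / 4) * ‖x‖ ^ 2) := by ring
  have hderiv (x : Sp N) (t : ℝ) :
      HasDerivAt (fun s : ℝ => f x * gausson N (x + s • v))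
        (f x * fderiv ℝ (gausson N) (x + t • v) v) t := by
    have hline : HasDerivAt (fun s : ℝ => x + s • v) v t := by
      simpa using ((hasDerivAt_id t).smul_const v).const_add x
    exact ((contDiff_gausson.differentiable one_ne_zero _).hasFDerivAt.comp_hasDerivAt t
      hline).ofReal_comp.const_mul (f x)
  simpa using (hasDerivAt_integral_of_dominated_loc_of_deriv_le (Metric.ball_mem_nhds 0 one_pos)
    (Eventually.of_forall fun t => (hint t).aestronglyMeasurable) (hint 0)
    (hf.1.mul (Continuous.aestronglyMeasurable (by fun_prop)))
    (ae_of_all _ hderiv_le) hbound (ae_of_all _ fun x t _ => hderiv x t)).2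

lemma re_integral_mul_fderiv_gausson_eq_zero {w : Sp N → ℂ} (hw : MemLp w 2)
    (h : ∀ y, (∫ x, w (x - y) * gausson N x).re ≤ (∫ x, w x * gausson N x).re) (v : Sp N) :
    (∫ x, w x * fderiv ℝ (gausson N) x v).re = 0 := by
  have hshift (t : ℝ) :
      ∫ x, w x * gausson N (x + t • v) = ∫ x, w (x - t • v) * gausson N x := by
    rw [← integral_sub_right_eq_self _ (t • v)]
    simp only [sub_add_cancel]
  have hlocmax : IsLocalMax (fun t : ℝ => (∫ x, w x * gausson N (x + t • v)).re) 0 :=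
    Eventually.of_forall fun t => by
      simpa only [hshift, zero_smul, add_zero, sub_zero] using h (t • v)
  exact hlocmax.hasDerivAt_eq_zero
    (Complex.reCLM.hasFDerivAt.comp_hasDerivAt 0 (hasDerivAt_integral_mul_gausson_add_smul hw v))

theorem stmt15_general (N : ℕ) (u : Sp N → ℂ) (hu : IsSigma u)
    (y₀ : Sp N) (θ₀ : ℝ)
    (hmin : ∀ (y : Sp N) (θ : ℝ),
      (∫ x, ‖Complex.exp (Complex.I * (θ₀ : ℂ)) * u (x - y₀) - (gausson N x : ℝ)‖ ^ 2) ≤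
        ∫ x, ‖Complex.exp (Complex.I * (θ : ℂ)) * u (x - y) - (gausson N x : ℝ)‖ ^ 2) :
    (∫ x, Complex.exp (Complex.I * (θ₀ : ℂ)) * u (x - y₀) * (gausson N x : ℝ)).im = 0 ∧
    ∀ j : Fin N,
      (∫ x, Complex.exp (Complex.I * (θ₀ : ℂ)) * u (x - y₀) * (pdR (gausson N) j x : ℝ)).re
        = 0 := by
  have hu2 : MemLp u 2 :=
    (memLp_two_iff_integrable_sq_norm hu.1.continuous.aestronglyMeasurable).2 hu.2.1
  have hmax (y : Sp N) (θ : ℝ) :=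
    re_integral_mul_le_of_integral_norm_sub_sq_le hu2 memLp_gausson (hmin y θ)
  refine ⟨?_, fun j => ?_⟩
  · simpa only [mul_assoc] using im_integral_exp_mul_eq_zero_of_forall_re_le
      (f := fun x => u (x - y₀) * gausson N x) fun θ => by simpa only [mul_assoc] using hmax y₀ θ
  · exact re_integral_mul_fderiv_gausson_eq_zero
      (w := fun x => Complex.exp (Complex.I * θ₀) * u (x - y₀))
      ((hu2.comp_measurePreserving (measurePreserving_sub_right volume y₀)).const_mul _)
      (fun y => by simpa only [sub_sub, add_comm y] using hmax (y₀ + y) θ₀) _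

/-- first-order conditions at an optimal modulation. -/
theorem stmt15 (N : ℕ) (hN : 1 ≤ N) (u : Sp N → ℂ) (hu : IsSigma u)
    (y₀ : Sp N) (θ₀ : ℝ)
    (hmin : ∀ (y : Sp N) (θ : ℝ),
      (∫ x, ‖Complex.exp (Complex.I * (θ₀ : ℂ)) * u (x - y₀) - (gausson N x : ℝ)‖ ^ 2) ≤
        ∫ x, ‖Complex.exp (Complex.I * (θ : ℂ)) * u (x - y) - (gausson N x : ℝ)‖ ^ 2) :
    (∫ x, Complex.exp (Complex.I * (θ₀ : ℂ)) * u (x - y₀) * (gausson N x : ℝ)).im = 0 ∧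
    ∀ j : Fin N,
      (∫ x, Complex.exp (Complex.I * (θ₀ : ℂ)) * u (x - y₀) * (pdR (gausson N) j x : ℝ)).re
        = 0 :=
  stmt15_general N u hu y₀ θ₀ hmin
end
end
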